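/- For every Borel probability measure μ on the unit sphere S² of ℝ³, the function C ↦ g(C,μ) is convex on [0,1]: for all p₁,p₂ ≥ 0 with p₁ + p₂ = 1 and all C₁,C₂ ∈ [0,1], g(p₁C₁ + p₂C₂, μ) ≤ p₁ g(C₁,μ) + p₂ g(C₂,μ). -/

import Mathlib

open MeasureTheory Real
open scoped ENNReal

noncomputable section

abbrev E3 := EuclideanSpace ℝ (Fin 3)

/-- The unit sphere S² in ℝ³. -/
def unitSphere : Set E3 := Metric.sphere (0 : E3) 1

/-- `g C μ` is the supremum over unit vectors `v` of `∫ √(C² + (1−C²)⟨r,v⟩²) dμ(r)`. -/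
def g (C : ℝ) (μ : Measure E3) : ℝ :=
  ⨆ v : unitSphere, ∫ r, Real.sqrt (C ^ 2 + (1 - C ^ 2) * (inner ℝ r (v : E3) : ℝ) ^ 2) ∂μ


/-!
For `t² ≤ 1` the integrand `√(C² + (1 - C²) t²) = √(t² + (1 - t²) C²)` is the Euclidean norm of
the affine map `C ↦ (|t|, √(1 - t²) C)` into `ℝ²`, hence convex in `C`. Since `μ` lives on the
sphere, `t = ⟨r, v⟩` satisfies `t² ≤ 1` almost everywhere; convexity survives integration in `r`
and the (bounded) supremum over `v`.
-/

open Set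

theorem convexOn_sqrt_add_mul_sq {a b : ℝ} (ha : 0 ≤ a) (hb : 0 ≤ b) :
    ConvexOn ℝ univ fun x : ℝ => √(a + b * x ^ 2) := by
  have hnorm : (fun x : ℝ => √(a + b * x ^ 2)) =
      norm ∘ AffineMap.lineMap (k := ℝ) !₂[√a, 0] !₂[√a, √b] := funext fun x => by
    simp [AffineMap.lineMap_apply, EuclideanSpace.norm_eq, Fin.sum_univ_two, mul_pow, sq_sqrt ha,
      sq_sqrt hb, mul_comm]
  rw [hnorm]
  exact (convexOn_norm convex_univ).comp_affineMap _

theorem convexOn_integral {α E : Type*} [MeasurableSpace α] {μ : Measure α} [AddCommMonoid E]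
    [Module ℝ E] {s : Set E} {f : E → α → ℝ} (hs : Convex ℝ s)
    (hint : ∀ x ∈ s, Integrable (f x) μ) (hconv : ∀ᵐ a ∂μ, ConvexOn ℝ s (f · a)) :
    ConvexOn ℝ s fun x => ∫ a, f x a ∂μ := by
  refine ⟨hs, fun x hx y hy p q hp hq hpq => ?_⟩
  simp only [smul_eq_mul]
  rw [← integral_const_mul, ← integral_const_mul,
    ← integral_add ((hint x hx).const_mul p) ((hint y hy).const_mul q)]
  refine integral_mono_ae (hint _ (hs hx hy hp hq hpq))
    (((hint x hx).const_mul p).add ((hint y hy).const_mul q)) ?_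
  filter_upwards [hconv] with a ha using ha.2 hx hy hp hq hpq

theorem convexOn_ciSup {ι E : Type*} [Nonempty ι] [AddCommMonoid E] [Module ℝ E] {s : Set E}
    {f : ι → E → ℝ} (hf : ∀ i, ConvexOn ℝ s (f i))
    (hbdd : ∀ x ∈ s, BddAbove (range fun i => f i x)) :
    ConvexOn ℝ s fun x => ⨆ i, f i x := by
  refine ⟨(hf (Classical.arbitrary ι)).1, fun x hx y hy p q hp hq hpq => ciSup_le fun i => ?_⟩
  show f i (p • x + q • y) ≤ p * (⨆ i, f i x) + q * ⨆ i, f i y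
  calc f i (p • x + q • y) ≤ p * f i x + q * f i y := (hf i).2 hx hy hp hq hpq
    _ ≤ p * (⨆ i, f i x) + q * ⨆ i, f i y := by
      gcongr
      exacts [le_ciSup (hbdd x hx) i, le_ciSup (hbdd y hy) i]

theorem inner_sq_le_one_of_mem_unitSphere {r v : E3} (hr : r ∈ unitSphere)
    (hv : v ∈ unitSphere) : inner ℝ r v ^ 2 ≤ 1 := by
  rw [unitSphere, mem_sphere_zero_iff_norm] at hr hv
  rw [sq_le_one_iff_abs_le_one]
  simpa [hr, hv] using abs_real_inner_le_norm r v

theorem sqrt_sq_add_one_sub_sq_mul_sq_le_one {C t : ℝ} (hC : C ^ 2 ≤ 1) (ht : t ^ 2 ≤ 1) :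
    √(C ^ 2 + (1 - C ^ 2) * t ^ 2) ≤ 1 :=
  sqrt_le_one.2 (by nlinarith [mul_nonneg (sub_nonneg.2 hC) (sub_nonneg.2 ht)])

theorem convexOn_sqrt_sq_add_one_sub_sq_mul_sq {t : ℝ} (ht : t ^ 2 ≤ 1) :
    ConvexOn ℝ univ fun C : ℝ => √(C ^ 2 + (1 - C ^ 2) * t ^ 2) := by
  convert convexOn_sqrt_add_mul_sq (sq_nonneg t) (sub_nonneg.2 ht) using 3
  ring

instance : Nonempty unitSphere :=
  ⟨⟨EuclideanSpace.single 0 1, by simp [unitSphere]⟩⟩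

section

variable {μ : Measure E3}

theorem ae_mem_unitSphere (hμ : μ unitSphereᶜ = 0) : ∀ᵐ r ∂μ, r ∈ unitSphere :=
  measure_eq_zero_iff_ae_notMem.1 hμ |>.mono fun _ => not_not.1

theorem ae_sqrt_sq_add_one_sub_sq_mul_inner_sq_le_one (hμ : μ unitSphereᶜ = 0) {C : ℝ}
    (hC : C ^ 2 ≤ 1) (v : unitSphere) :
    ∀ᵐ r ∂μ, √(C ^ 2 + (1 - C ^ 2) * inner ℝ r (v : E3) ^ 2) ≤ 1 := by
  filter_upwards [ae_mem_unitSphere hμ] with r hr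
  exact sqrt_sq_add_one_sub_sq_mul_sq_le_one hC (inner_sq_le_one_of_mem_unitSphere hr v.2)

theorem integrable_sqrt_sq_add_one_sub_sq_mul_inner_sq [IsFiniteMeasure μ]
    (hμ : μ unitSphereᶜ = 0) {C : ℝ} (hC : C ^ 2 ≤ 1) (v : unitSphere) :
    Integrable (fun r => √(C ^ 2 + (1 - C ^ 2) * inner ℝ r (v : E3) ^ 2)) μ := by
  refine Integrable.of_bound (by fun_prop) 1 ?_
  filter_upwards [ae_sqrt_sq_add_one_sub_sq_mul_inner_sq_le_one hμ hC v] with r hr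
  rwa [Real.norm_of_nonneg (sqrt_nonneg _)]

theorem convexOn_g [IsProbabilityMeasure μ] (hμ : μ unitSphereᶜ = 0) :
    ConvexOn ℝ (Icc 0 1) (g · μ) := by
  have hsq : ∀ C ∈ Icc (0 : ℝ) 1, C ^ 2 ≤ 1 := fun C hC => pow_le_one₀ hC.1 hC.2
  have hint := fun C hC => integrable_sqrt_sq_add_one_sub_sq_mul_inner_sq hμ (hsq C hC)
  refine convexOn_ciSup (fun v => convexOn_integral (convex_Icc 0 1) (hint · · v) ?_)
    fun C hC => ⟨1, ?_⟩
  · filter_upwards [ae_mem_unitSphere hμ] with r hr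
    exact (convexOn_sqrt_sq_add_one_sub_sq_mul_sq
      (inner_sq_le_one_of_mem_unitSphere hr v.2)).subset (subset_univ _) (convex_Icc 0 1)
  · rintro _ ⟨v, rfl⟩
    calc _ ≤ ∫ _, (1 : ℝ) ∂μ := integral_mono_ae (hint C hC v) (integrable_const 1)
          (ae_sqrt_sq_add_one_sub_sq_mul_inner_sq_le_one hμ (hsq C hC) v)
      _ = 1 := by simp

end

theorem g_convexOn (μ : Measure E3) [IsProbabilityMeasure μ] (hμ : μ unitSphereᶜ = 0)
    (p₁ p₂ C₁ C₂ : ℝ) (hp₁ : 0 ≤ p₁) (hp₂ : 0 ≤ p₂) (hp : p₁ + p₂ = 1)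
    (hC₁ : C₁ ∈ Set.Icc (0 : ℝ) 1) (hC₂ : C₂ ∈ Set.Icc (0 : ℝ) 1) :
    g (p₁ * C₁ + p₂ * C₂) μ ≤ p₁ * g C₁ μ + p₂ * g C₂ μ :=
  (convexOn_g hμ).2 hC₁ hC₂ hp₁ hp₂ hp
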